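/- arXiv:2409.04870 — 2 statements merged into one kernel-verified Lean document; each statement's English description precedes it below -/
import Mathlib

section
/- Let k > 0, z ∈ ℝ², and let s, t be nonnegative integers. For every x ∈ ℝ² with x ≠ z, writing x − z = r(cos θ, sin θ) with r = |x − z| > 0, the iterated partial derivative of the function F_z(x) = ∫₀^{2π} exp(i k (x − z)·d(φ)) dφ is a finite sum of Bessel functions: ∂_{x₁}^{s} ∂_{x₂}^{t} F_z(x) = Σ_{n = −(s+t)}^{s+t} c_n J_n(k r) e^{i n θ}, where c_n = (i k)^{s+t} iⁿ ω_n and ω_n = (1/(iᵗ 2^{s+t})) ∫₀^{2π} (e^{iφ} + e^{−iφ})^{s} (e^{iφ} − e^{−iφ})^{t} e^{−i n φ} dφ. -/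
open Complex Real MeasureTheory
open scoped RealInnerProductSpace InnerProductSpace

/-- The Bessel function of the first kind of integer order `n`, via the
integral representation `J_n(t) = (1/(2π)) ∫_{−π}^{π} exp(i(t sin φ − n φ)) dφ`. -/
noncomputable def besselJ (n : ℤ) (t : ℝ) : ℂ :=
  (1 / (2 * Real.pi)) *
    ∫ φ in (-Real.pi)..Real.pi,
      Complex.exp (Complex.I * ((t : ℂ) * (Real.sin φ : ℂ) - (n : ℂ) * (φ : ℂ)))

/-- The unit direction vector `d(φ) = (cos φ, sin φ)` in the Euclidean plane. -/
noncomputable def dir (φ : ℝ) : EuclideanSpace ℝ (Fin 2) :=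
  (WithLp.equiv 2 (Fin 2 → ℝ)).symm ![Real.cos φ, Real.sin φ]

/-- First-order partial derivative in the `i`-th coordinate direction. -/
noncomputable def pd (i : Fin 2) (f : EuclideanSpace ℝ (Fin 2) → ℂ) :
    EuclideanSpace ℝ (Fin 2) → ℂ :=
  fun x => fderiv ℝ f x (EuclideanSpace.single i 1)

/-- The Herglotz wave function with kernel `φ ↦ exp(−i k z·d(φ))`, i.e.
`F_z(x) = ∫₀^{2π} exp(i k (x−z)·d(φ)) dφ`. -/
noncomputable def Fz (k : ℝ) (z : EuclideanSpace ℝ (Fin 2)) :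
    EuclideanSpace ℝ (Fin 2) → ℂ :=
  fun x => ∫ φ in (0:ℝ)..(2 * Real.pi),
    Complex.exp (Complex.I * (k : ℂ) * (⟪x - z, dir φ⟫_ℝ : ℂ))

/-- The coefficient `ω_n = (1/(iᵗ 2^{s+t})) ∫₀^{2π} (e^{iφ}+e^{−iφ})^s (e^{iφ}−e^{−iφ})^t e^{−inφ} dφ`. -/
noncomputable def omegaCoef (s t : ℕ) (n : ℤ) : ℂ :=
  (1 / (Complex.I ^ t * 2 ^ (s + t))) *
    ∫ φ in (0:ℝ)..(2 * Real.pi),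
      (Complex.exp (Complex.I * (φ : ℂ)) + Complex.exp (-(Complex.I * (φ : ℂ)))) ^ s *
        (Complex.exp (Complex.I * (φ : ℂ)) - Complex.exp (-(Complex.I * (φ : ℂ)))) ^ t *
          Complex.exp (-(Complex.I * (n : ℂ) * (φ : ℂ)))

/-!
Differentiating under the integral sign, each `∂ⱼ` multiplies the integrand of `F_z` by
`i k dⱼ(φ)`, so `∂₁^s ∂₂^t F_z(x) = (i k)^(s+t) ∫₀^{2π} cos^s φ sin^t φ e^{i k r cos(φ - θ)} dφ`.
The weight `cos^s sin^t` is a trigonometric polynomial of degree `s + t` whose Fourier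
coefficients are the `ω_n`, and by Bessel's integral each Fourier mode `e^{i n φ}` integrates
against the plane wave to `2π iⁿ e^{i n θ} J_n(k r)`.
-/

open Finset intervalIntegral

lemma integral_exp_I_mul_int_mul (m : ℤ) :
    ∫ φ in (0:ℝ)..2 * π, exp (I * m * φ) = if m = 0 then (2 * π : ℂ) else 0 := by
  split_ifs with hm
  · simp [hm]
  have hIm : I * m ≠ 0 := mul_ne_zero I_ne_zero (Int.cast_ne_zero.mpr hm)
  have hperiod : exp (I * m * (2 * π)) = 1 := by
    rw [← exp_int_mul_two_pi_mul_I m]; ring_nf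
  simp [integral_exp_mul_complex hIm, hperiod]

lemma integral_sum_mul_exp_neg_I_mul (S : Finset ℤ) (a : ℤ → ℂ) (m : ℤ) :
    ∫ φ in (0:ℝ)..2 * π, (∑ n ∈ S, a n * exp (I * n * φ)) * exp (-(I * m * φ)) =
      if m ∈ S then 2 * π * a m else 0 := by
  have hterm (n : ℤ) (φ : ℝ) :
      a n * exp (I * n * φ) * exp (-(I * m * φ)) = a n * exp (I * (n - m : ℤ) * φ) := by
    rw [mul_assoc, ← Complex.exp_add]; push_cast; ring_nf
  simp_rw [sum_mul, hterm]
  rw [integral_finsetSum fun n _ => (by fun_prop : Continuous _).intervalIntegrable _ _]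
  simp only [intervalIntegral.integral_const_mul, integral_exp_I_mul_int_mul, sub_eq_zero, mul_ite,
    mul_zero, sum_ite_eq']
  split_ifs <;> ring

lemma periodic_exp_I_mul_int_mul_mul_exp_cos (n : ℤ) (b θ : ℝ) :
    Function.Periodic (fun φ : ℝ => exp (I * n * φ) * exp (I * b * Real.cos (φ - θ))) (2 * π) := by
  intro φ
  have hexp : exp (I * n * (φ + 2 * π : ℝ)) = exp (I * n * φ) := by
    rw [← mul_one (exp (I * n * φ)), ← exp_int_mul_two_pi_mul_I n, ← Complex.exp_add]
    push_cast; ring_nf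
  dsimp only
  rw [hexp, add_sub_right_comm, Real.cos_add_two_pi]

lemma integral_exp_I_mul_int_mul_mul_exp_cos_eq_besselJ (n : ℤ) (b θ : ℝ) :
    ∫ φ in (0:ℝ)..2 * π, exp (I * n * φ) * exp (I * b * Real.cos (φ - θ)) =
      2 * π * I ^ n * exp (I * n * θ) * besselJ n b := by
  -- Over the period centred at `θ + π / 2`, the substitution `φ = θ + π / 2 - ψ` turns
  -- `cos (φ - θ)` into `sin ψ`.
  have hI : I ^ n = exp (I * n * (π / 2 : ℝ)) := by
    rw [show I * n * ((π / 2 : ℝ) : ℂ) = n * (π / 2 * I) by push_cast; ring, exp_int_mul,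
      exp_pi_div_two_mul_I]
  have hshift (ψ : ℝ) : exp (I * n * (θ + π / 2 - ψ : ℝ)) *
      exp (I * b * Real.cos (θ + π / 2 - ψ - θ)) =
      I ^ n * exp (I * n * θ) * exp (I * (b * Real.sin ψ - n * ψ)) := by
    rw [show θ + π / 2 - ψ - θ = π / 2 - ψ by ring, Real.cos_pi_div_two_sub, hI, ← Complex.exp_add,
      ← Complex.exp_add, ← Complex.exp_add]
    push_cast; ring_nf
  have hperiod := (periodic_exp_I_mul_int_mul_mul_exp_cos n b θ).intervalIntegral_add_eq 0
    (θ + π / 2 - π)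
  rw [zero_add] at hperiod
  rw [hperiod, show θ + π / 2 - π + 2 * π = θ + π / 2 - -π by ring, ← integral_comp_sub_left]
  simp_rw [hshift, intervalIntegral.integral_const_mul]
  rw [besselJ]
  field_simp

lemma integral_mul_exp_cos_eq_sum_besselJ (S : Finset ℤ) (a : ℤ → ℂ) (f : ℝ → ℂ)
    (hf : ∀ φ, f φ = ∑ n ∈ S, a n * exp (I * n * φ)) (b θ : ℝ) :
    ∫ φ in (0:ℝ)..2 * π, f φ * exp (I * b * Real.cos (φ - θ)) =
      ∑ n ∈ S, (∫ ψ in (0:ℝ)..2 * π, f ψ * exp (-(I * n * ψ))) * I ^ n * besselJ n b *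
        exp (I * n * θ) := by
  have hcoeff : ∀ n ∈ S, ∫ ψ in (0:ℝ)..2 * π, f ψ * exp (-(I * n * ψ)) = 2 * π * a n := by
    intro n hn
    simp_rw [hf, integral_sum_mul_exp_neg_I_mul, if_pos hn]
  calc _ = ∑ n ∈ S, a n *
        ∫ φ in (0:ℝ)..2 * π, exp (I * n * φ) * exp (I * b * Real.cos (φ - θ)) := by
        simp_rw [hf, sum_mul]
        rw [integral_finsetSum fun n _ => (by fun_prop : Continuous _).intervalIntegrable _ _]
        simp_rw [← intervalIntegral.integral_const_mul, mul_assoc]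
    _ = _ := sum_congr rfl fun n hn => by
        rw [integral_exp_I_mul_int_mul_mul_exp_cos_eq_besselJ, hcoeff n hn]
        ring

lemma exp_neg_mul_eval_exp_eq_sum_Icc (q : Polynomial ℂ) (N : ℕ) (hq : q.natDegree ≤ 2 * N)
    (φ : ℝ) :
    exp (-(I * N * φ)) * q.eval (exp (I * φ)) =
      ∑ n ∈ Icc (-N : ℤ) N, q.coeff (n + N).toNat * exp (I * n * φ) := by
  rw [Polynomial.eval_eq_sum_range' (Nat.lt_succ_of_le hq), Int.Icc_eq_finset_map, sum_map,
    show (N + 1 - -N : ℤ).toNat = 2 * N + 1 by omega, mul_sum]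
  refine sum_congr rfl fun m _ => ?_
  simp only [Function.Embedding.trans_apply, Nat.castEmbedding_apply, addLeftEmbedding_apply,
    neg_add_cancel_comm, Int.toNat_natCast]
  rw [← Complex.exp_nat_mul, mul_left_comm, ← Complex.exp_add]
  push_cast; ring_nf

lemma exp_I_mul_add_exp_neg_I_mul (x : ℂ) : exp (I * x) + exp (-(I * x)) = 2 * Complex.cos x := by
  rw [two_cos, mul_comm, neg_mul]

lemma exp_I_mul_sub_exp_neg_I_mul (x : ℂ) :
    exp (I * x) - exp (-(I * x)) = 2 * I * Complex.sin x := by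
  rw [Complex.sin, mul_comm I x, neg_mul]
  ring_nf
  rw [I_sq]
  ring

lemma omegaCoef_eq_integral (s t : ℕ) (n : ℤ) :
    omegaCoef s t n =
      ∫ φ in (0:ℝ)..2 * π, (Real.cos φ : ℂ) ^ s * (Real.sin φ : ℂ) ^ t * exp (-(I * n * φ)) := by
  rw [omegaCoef, ← intervalIntegral.integral_const_mul]
  refine integral_congr fun φ _ => ?_
  rw [exp_I_mul_add_exp_neg_I_mul, exp_I_mul_sub_exp_neg_I_mul, ofReal_cos, ofReal_sin]
  field_simp
  ring

lemma exists_cos_pow_mul_sin_pow_eq_sum_Icc (s t : ℕ) : ∃ a : ℤ → ℂ, ∀ φ : ℝ,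
    (Real.cos φ : ℂ) ^ s * (Real.sin φ : ℂ) ^ t =
      ∑ n ∈ Icc (-(s + t : ℤ)) (s + t), a n * exp (I * n * φ) := by
  -- `q (e^{iφ}) = e^{i (s + t) φ} cos^s φ sin^t φ`
  open Polynomial in
  let q : ℂ[X] := C (1 / (2 ^ s * (2 * I) ^ t)) * (X ^ 2 + 1) ^ s * (X ^ 2 - 1) ^ t
  have hq : q.natDegree ≤ 2 * (s + t) := by
    simp only [q]
    compute_degree!
    lia
  refine ⟨fun n => q.coeff (n + (s + t)).toNat, fun φ => ?_⟩
  have hexpand := exp_neg_mul_eval_exp_eq_sum_Icc q (s + t) hq φ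
  push_cast at hexpand
  rw [← hexpand]
  have hw : exp (I * φ) ≠ 0 := Complex.exp_ne_zero _
  have hcos : (Real.cos φ : ℂ) = (exp (I * φ))⁻¹ * (exp (I * φ) ^ 2 + 1) / 2 := by
    rw [ofReal_cos, eq_div_iff two_ne_zero, mul_comm, ← exp_I_mul_add_exp_neg_I_mul,
      Complex.exp_neg]
    field_simp
  have hsin : (Real.sin φ : ℂ) = (exp (I * φ))⁻¹ * (exp (I * φ) ^ 2 - 1) / (2 * I) := by
    rw [ofReal_sin, eq_div_iff (mul_ne_zero two_ne_zero I_ne_zero), mul_comm,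
      ← exp_I_mul_sub_exp_neg_I_mul, Complex.exp_neg]
    field_simp
  have hN : exp (-(I * (s + t) * φ)) = (exp (I * φ))⁻¹ ^ (s + t) := by
    rw [← Complex.exp_neg, ← Complex.exp_nat_mul]; push_cast; ring_nf
  simp only [q, Polynomial.eval_mul, Polynomial.eval_C, Polynomial.eval_pow, Polynomial.eval_add,
    Polynomial.eval_sub, Polynomial.eval_X, Polynomial.eval_one]
  rw [hcos, hsin, hN, div_pow, div_pow, mul_pow, mul_pow]
  ring

lemma dir_apply_zero (φ : ℝ) : dir φ 0 = Real.cos φ := rfl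

lemma dir_apply_one (φ : ℝ) : dir φ 1 = Real.sin φ := rfl

lemma inner_dir_dir (θ φ : ℝ) : ⟪dir θ, dir φ⟫_ℝ = Real.cos (φ - θ) := by
  simp [PiLp.inner_apply, Fin.sum_univ_two, dir_apply_zero, dir_apply_one, Real.cos_sub]

lemma norm_dir (φ : ℝ) : ‖dir φ‖ = 1 := by
  rw [norm_eq_sqrt_real_inner, inner_dir_dir, sub_self, Real.cos_zero, Real.sqrt_one]

@[fun_prop]
lemma continuous_dir : Continuous dir :=
  (PiLp.continuous_toLp 2 _).comp (by fun_prop)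

section PlaneWave

variable {E : Type*} [NormedAddCommGroup E] [InnerProductSpace ℝ E]

lemma hasFDerivAt_exp_mul_inner (c : ℂ) (z d x : E) :
    HasFDerivAt (fun y => exp (c * ⟪y - z, d⟫_ℝ))
      ((c * exp (c * ⟪x - z, d⟫_ℝ)) • (ofRealCLM ∘L innerSL ℝ d)) x := by
  have hlin : HasFDerivAt (fun y => c * ((ofRealCLM ∘L innerSL ℝ d) (y - z)))
      (c • (ofRealCLM ∘L innerSL ℝ d)) x :=
    (((ofRealCLM ∘L innerSL ℝ d).hasFDerivAt).comp x ((hasFDerivAt_id x).sub_const z)).const_mul c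
  simp only [ContinuousLinearMap.comp_apply, innerSL_apply_apply, ofRealCLM_apply] at hlin
  convert hlin.cexp using 1
  · simp only [real_inner_comm d]
  · rw [smul_smul, mul_comm, real_inner_comm d]

end PlaneWave

noncomputable def herglotzWave (k : ℝ) (z : EuclideanSpace ℝ (Fin 2)) (g : ℝ → ℂ)
    (x : EuclideanSpace ℝ (Fin 2)) : ℂ :=
  ∫ φ in (0:ℝ)..2 * π, g φ * exp (I * k * ⟪x - z, dir φ⟫_ℝ)

lemma Fz_eq_herglotzWave (k : ℝ) (z : EuclideanSpace ℝ (Fin 2)) : Fz k z = herglotzWave k z 1 := by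
  funext x
  simp [Fz, herglotzWave]

section Derivative

variable (k : ℝ) (z : EuclideanSpace ℝ (Fin 2)) {g : ℝ → ℂ}

lemma hasFDerivAt_herglotzWave (hg : Continuous g) (x : EuclideanSpace ℝ (Fin 2)) :
    HasFDerivAt (herglotzWave k z g)
      (∫ φ in (0:ℝ)..2 * π, (g φ * (I * k * exp (I * k * ⟪x - z, dir φ⟫_ℝ))) •
        (ofRealCLM ∘L innerSL ℝ (dir φ))) x := by
  have hnorm (y : EuclideanSpace ℝ (Fin 2)) (φ : ℝ) :
      ‖(g φ * (I * k * exp (I * k * ⟪y - z, dir φ⟫_ℝ))) • (ofRealCLM ∘L innerSL ℝ (dir φ))‖ ≤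
        ‖g φ‖ * |k| := by
    have hL : ‖ofRealCLM ∘L innerSL ℝ (dir φ)‖ ≤ 1 :=
      (ContinuousLinearMap.opNorm_comp_le ofRealCLM (innerSL ℝ (dir φ))).trans
        (by simp [norm_dir])
    have hexp : ‖exp (I * k * ⟪y - z, dir φ⟫_ℝ)‖ = 1 := by
      rw [Complex.norm_exp]; simp
    rw [norm_smul, norm_mul, norm_mul, hexp, norm_mul, norm_I, norm_real, Real.norm_eq_abs]
    simpa using mul_le_mul_of_nonneg_left hL (by positivity : 0 ≤ ‖g φ‖ * |k|)
  refine intervalIntegral.hasFDerivAt_integral_of_dominated_of_fderiv_le (μ := volume)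
    (F := fun y φ => g φ * exp (I * k * ⟪y - z, dir φ⟫_ℝ))
    (F' := fun y φ => (g φ * (I * k * exp (I * k * ⟪y - z, dir φ⟫_ℝ))) •
      (ofRealCLM ∘L innerSL ℝ (dir φ)))
    (bound := fun φ => ‖g φ‖ * |k|) Filter.univ_mem ?_ ?_ ?_ ?_ ?_ ?_
  · exact Filter.Eventually.of_forall fun y =>
      (Continuous.aestronglyMeasurable (by fun_prop)).restrict
  · exact (by fun_prop : Continuous _).intervalIntegrable _ _
  · exact (Continuous.aestronglyMeasurable (by fun_prop)).restrict
  · exact Filter.Eventually.of_forall fun φ _ y _ => hnorm y φ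
  · exact (by fun_prop : Continuous _).intervalIntegrable _ _
  · refine Filter.Eventually.of_forall fun φ _ y _ => ?_
    simpa only [smul_smul] using ((hasFDerivAt_exp_mul_inner (I * k) z (dir φ) y).const_mul (g φ))

lemma pd_herglotzWave (hg : Continuous g) (i : Fin 2) :
    pd i (herglotzWave k z g) = herglotzWave k z (fun φ => I * k * dir φ i * g φ) := by
  funext x
  have hint : IntervalIntegrable (fun φ => (g φ * (I * k * exp (I * k * ⟪x - z, dir φ⟫_ℝ))) •
      (ofRealCLM ∘L innerSL ℝ (dir φ))) volume 0 (2 * π) := by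
    exact (by fun_prop : Continuous _).intervalIntegrable _ _
  rw [pd, (hasFDerivAt_herglotzWave k z hg x).fderiv,
    ContinuousLinearMap.intervalIntegral_apply hint]
  refine integral_congr fun φ _ => ?_
  simp [EuclideanSpace.inner_single_right]
  ring

lemma iterate_pd_herglotzWave (hg : Continuous g) (i : Fin 2) (m : ℕ) :
    (pd i)^[m] (herglotzWave k z g) =
      herglotzWave k z (fun φ => (I * k * dir φ i) ^ m * g φ) := by
  induction m generalizing g with
  | zero => simp
  | succ m ih =>
    rw [Function.iterate_succ_apply, pd_herglotzWave k z hg, ih (by fun_prop)]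
    congr with φ
    ring

end Derivative

lemma herglotzWave_apply_of_sub_eq (k : ℝ) {z x : EuclideanSpace ℝ (Fin 2)} {r θ : ℝ}
    (hxz : x - z = r • dir θ) (g : ℝ → ℂ) :
    herglotzWave k z g x = ∫ φ in (0:ℝ)..2 * π, g φ * exp (I * (k * r : ℝ) * Real.cos (φ - θ)) := by
  refine integral_congr fun φ _ => ?_
  simp only [hxz, real_inner_smul_left, inner_dir_dir]
  push_cast
  ring_nf

theorem deriv_herglotz_bessel_sum_general (k : ℝ) (z : EuclideanSpace ℝ (Fin 2))
    (s t : ℕ) (x : EuclideanSpace ℝ (Fin 2)) (r θ : ℝ)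
    (hxz : x - z = r • dir θ) :
    (pd 0)^[s] ((pd 1)^[t] (Fz k z)) x =
      ∑ n ∈ Finset.Icc (-(s + t : ℤ)) (s + t : ℤ),
        ((Complex.I * (k : ℂ)) ^ (s + t) * Complex.I ^ n * omegaCoef s t n) *
          besselJ n (k * r) * Complex.exp (Complex.I * (n : ℂ) * (θ : ℂ)) := by
  have hderiv : (pd 0)^[s] ((pd 1)^[t] (Fz k z)) = herglotzWave k z
      (fun φ => (I * k) ^ (s + t) * ((Real.cos φ : ℂ) ^ s * (Real.sin φ : ℂ) ^ t)) := by
    rw [Fz_eq_herglotzWave, iterate_pd_herglotzWave k z continuous_one,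
      iterate_pd_herglotzWave k z (by fun_prop)]
    congr with φ
    simp only [dir_apply_zero, dir_apply_one, Pi.one_apply]
    ring
  obtain ⟨a, ha⟩ := exists_cos_pow_mul_sin_pow_eq_sum_Icc s t
  rw [hderiv, herglotzWave_apply_of_sub_eq k hxz]
  simp_rw [mul_assoc ((I * k) ^ (s + t)), intervalIntegral.integral_const_mul]
  rw [integral_mul_exp_cos_eq_sum_besselJ _ a _ ha, mul_sum]
  refine sum_congr rfl fun n _ => ?_
  rw [omegaCoef_eq_integral]
  push_cast
  ring

/-- For `k > 0`, `z ∈ ℝ²` and nonnegative integers `s, t`: at every `x ≠ z`, writing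
`x − z = r (cos θ, sin θ)` with `r = ‖x − z‖ > 0`, the iterated partial derivative of
`F_z` is the finite sum `∂₁^s ∂₂^t F_z(x) = Σ_{n=−(s+t)}^{s+t} c_n J_n(k r) e^{i n θ}`
with `c_n = (i k)^{s+t} iⁿ ω_n`. -/
theorem deriv_herglotz_bessel_sum (k : ℝ) (hk : 0 < k) (z : EuclideanSpace ℝ (Fin 2))
    (s t : ℕ) (x : EuclideanSpace ℝ (Fin 2)) (hx : x ≠ z) (r θ : ℝ)
    (hr : r = ‖x - z‖) (hxz : x - z = r • dir θ) :
    (pd 0)^[s] ((pd 1)^[t] (Fz k z)) x =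
      ∑ n ∈ Finset.Icc (-(s + t : ℤ)) (s + t : ℤ),
        ((Complex.I * (k : ℂ)) ^ (s + t) * Complex.I ^ n * omegaCoef s t n) *
          besselJ n (k * r) * Complex.exp (Complex.I * (n : ℂ) * (θ : ℂ)) :=
  deriv_herglotz_bessel_sum_general k z s t x r θ hxz
end

section
/- Let H be a complex Hilbert space and let F : H → H be a bounded linear operator satisfying F − F* = (i/(4π)) F* F. Then the operator norm of F is at most 8π, i.e., ‖F g‖ ≤ 8π ‖g‖ for every g ∈ H. -/
open Complex Real
open scoped InnerProductSpace

/-!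
Pairing `T - T† = (r i) T†T` with `g` gives `r ‖T g‖² = 2 Im ⟪g, T g⟫`, since `⟪g, T† g⟫` is the
conjugate of `⟪g, T g⟫` and `⟪g, T†T g⟫ = ‖T g‖²` is real. Cauchy–Schwarz bounds the right-hand
side by `2 ‖T g‖ ‖g‖`, hence `‖T g‖ ≤ (2 / r) ‖g‖`; the theorem is the case `r = 1 / (4π)`.
-/

namespace ContinuousLinearMap

variable {H : Type*} [NormedAddCommGroup H] [InnerProductSpace ℂ H] [CompleteSpace H]

theorem im_inner_sub_adjoint_apply_self (T : H →L[ℂ] H) (g : H) :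
    (⟪g, (T - adjoint T) g⟫_ℂ).im = 2 * (⟪g, T g⟫_ℂ).im := by
  rw [sub_apply, inner_sub_right, adjoint_inner_right, ← inner_conj_symm g (T g), sub_im,
    conj_im]
  ring

theorem inner_adjoint_comp_self_apply (T : H →L[ℂ] H) (g : H) :
    ⟪g, (adjoint T ∘L T) g⟫_ℂ = ((‖T g‖ ^ 2 : ℝ) : ℂ) := by
  rw [comp_apply, adjoint_inner_right, inner_self_eq_norm_sq_to_K, ofReal_pow]
  rfl

theorem mul_norm_apply_sq_eq_of_sub_adjoint_eq {T : H →L[ℂ] H} {r : ℝ}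
    (hT : T - adjoint T = ((r : ℂ) * I) • (adjoint T ∘L T)) (g : H) :
    r * ‖T g‖ ^ 2 = 2 * (⟪g, T g⟫_ℂ).im := by
  rw [← im_inner_sub_adjoint_apply_self, hT, smul_apply, inner_smul_right,
    inner_adjoint_comp_self_apply]
  simp [-ofReal_pow]

theorem norm_apply_le_of_sub_adjoint_eq {T : H →L[ℂ] H} {r : ℝ} (hr : 0 < r)
    (hT : T - adjoint T = ((r : ℂ) * I) • (adjoint T ∘L T)) (g : H) :
    ‖T g‖ ≤ 2 / r * ‖g‖ := by
  have hsq : r * ‖T g‖ ^ 2 ≤ 2 * (‖T g‖ * ‖g‖) := by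
    rw [mul_norm_apply_sq_eq_of_sub_adjoint_eq hT]
    gcongr
    calc (⟪g, T g⟫_ℂ).im ≤ ‖⟪g, T g⟫_ℂ‖ := im_le_norm _
      _ ≤ ‖g‖ * ‖T g‖ := norm_inner_le_norm g (T g)
      _ = ‖T g‖ * ‖g‖ := mul_comm _ _
  rw [div_mul_eq_mul_div, le_div_iff₀ hr]
  nlinarith [norm_nonneg (T g), norm_nonneg g, mul_nonneg (norm_nonneg (T g)) (norm_nonneg g)]

end ContinuousLinearMap

/-- If a bounded operator `F` on a complex Hilbert space satisfies
`F − F* = (i/(4π)) F* F`, then `‖F g‖ ≤ 8π ‖g‖` for every `g`. -/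
theorem norm_le_of_farfield_identity {H : Type*} [NormedAddCommGroup H]
    [InnerProductSpace ℂ H] [CompleteSpace H] (F : H →L[ℂ] H)
    (hF : F - ContinuousLinearMap.adjoint F =
      ((Complex.I / (4 * Real.pi)) : ℂ) • ((ContinuousLinearMap.adjoint F).comp F))
    (g : H) :
    ‖F g‖ ≤ 8 * Real.pi * ‖g‖ := by
  have hcoeff : Complex.I / (4 * π) = ((1 / (4 * π) : ℝ) : ℂ) * I := by
    push_cast
    ring
  rw [hcoeff] at hF
  calc ‖F g‖ ≤ 2 / (1 / (4 * π)) * ‖g‖ :=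
        ContinuousLinearMap.norm_apply_le_of_sub_adjoint_eq (by positivity) hF g
    _ = 8 * π * ‖g‖ := by
        field_simp
        ring
end
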